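/- If Λ ⊊ Σ_A is a shift space with Λ ≠ {Ø}, then Λ is not a finitely defined set in Σ_A. -/

import Mathlib

namespace OTW

/-- The Ott-Tomforde-Willis full shift `Σ_A`: sequences over `A ∪ {õ}` (with `õ = none`)
such that once the empty letter `õ` appears, it repeats forever. -/
@[ext]
structure FullShift (A : Type*) where
  val : ℕ → Option A
  tail : ∀ i, val i = none → val (i + 1) = none

variable {A B : Type*}

/-- The shift map `σ`. -/
def shiftMap (x : FullShift A) : FullShift A :=
  ⟨fun i => x.val (i + 1), fun i hi => x.tail (i + 1) hi⟩

/-- The empty sequence `Ø`. -/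
def emptySeq : FullShift A :=
  ⟨fun _ => none, fun _ _ => rfl⟩

theorem val_none_mono (x : FullShift A) :
    ∀ {k m : ℕ}, k ≤ m → x.val k = none → x.val m = none := by
  intro k m h hk
  induction m, h using Nat.le_induction with
  | base => exact hk
  | succ m hm ih => exact x.tail m ih

/-- The finite sequence determined by a word `w : List A`. -/
def finSeq (w : List A) : FullShift A where
  val i := (w.drop i).head?
  tail := by
    intro i hi
    rw [List.head?_eq_none_iff] at hi ⊢
    rw [List.drop_eq_nil_iff] at hi ⊢
    omega

/-- Generalized cylinder `Z(w, F)`. -/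
def Zcyl (w : List A) (F : Finset A) : Set (FullShift A) :=
  {x | (∀ i : Fin w.length, x.val i = some (w.get i)) ∧ ∀ a ∈ F, x.val w.length ≠ some a}

/-- The topology on `Σ_A` generated by the generalized cylinders. -/
instance : TopologicalSpace (FullShift A) :=
  TopologicalSpace.generateFrom {S | ∃ (w : List A) (F : Finset A), S = Zcyl w F}

/-- The letters `L_Λ` used by sequences of `Λ`. -/
def letters (Λ : Set (FullShift A)) : Set A :=
  {a | ∃ x ∈ Λ, ∃ i, x.val i = some a}

/-- `w` is a (fully lettered) block appearing in some sequence of `Λ`. -/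
def IsBlock (Λ : Set (FullShift A)) (w : List A) : Prop :=
  ∃ x ∈ Λ, ∃ n, ∀ i : Fin w.length, x.val (n + i) = some (w.get i)

/-- Ott-Tomforde-Willis shift space: closed, shift invariant, with the
infinite extension property. -/
def IsShiftSpace (Λ : Set (FullShift A)) : Prop :=
  IsClosed Λ ∧ (∀ x ∈ Λ, shiftMap x ∈ Λ) ∧
    (emptySeq ∈ Λ ↔ (letters Λ).Infinite) ∧
    (∀ w : List A, w ≠ [] → (finSeq w ∈ Λ ↔ {b : A | IsBlock Λ (w ++ [b])}.Infinite))

/-- `x` begins with the block `b` (a word over the extended alphabet `A ∪ {õ}`). -/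
def Prefixed (x : FullShift A) (b : List (Option A)) : Prop :=
  ∀ i : Fin b.length, x.val i = b.get i

/-- `(P, Q)` is a representation of `C` as a finitely defined set in `Λ`:
membership in `C` is witnessed by an initial block in `P`, and membership in the
complement by an initial block in `Q`. -/
def FDRep (Λ C : Set (FullShift A)) (P Q : Set (List (Option A))) : Prop :=
  (∀ b ∈ P, b ≠ []) ∧ (∀ b ∈ Q, b ≠ []) ∧
    C = {x ∈ Λ | ∃ b ∈ P, Prefixed x b} ∧
    Λ \ C = {x ∈ Λ | ∃ b ∈ Q, Prefixed x b}

/-- `C` is a finitely defined set in `Λ`. -/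
def FinitelyDefinedIn (Λ C : Set (FullShift A)) : Prop :=
  ∃ P Q, FDRep Λ C P Q

/-- `S` is a finite (possibly empty) union of generalized cylinders of `Λ`. -/
def IsFinUnionCyl (Λ S : Set (FullShift A)) : Prop :=
  ∃ (n : ℕ) (w : Fin n → List A) (F : Fin n → Finset A),
    S = Λ ∩ ⋃ i, Zcyl (w i) (F i)

/-- `Φ` is the sliding block code determined by the partition `{C_a}` of `Λ` into
finitely defined sets, with `C_õ` shift invariant. -/
def IsSBCWith (Λ : Set (FullShift A)) (Φ : FullShift A → FullShift B)
    (C : Option B → Set (FullShift A)) : Prop :=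
  (∀ a, C a ⊆ Λ) ∧ (∀ x ∈ Λ, ∃! a, x ∈ C a) ∧
    (∀ a, FinitelyDefinedIn Λ (C a)) ∧
    (∀ x ∈ C none, shiftMap x ∈ C none) ∧
    (∀ x ∈ Λ, ∀ n : ℕ, shiftMap^[n] x ∈ C ((Φ x).val n))

/-- Sliding block code. -/
def IsSlidingBlockCode (Λ : Set (FullShift A)) (Φ : FullShift A → FullShift B) : Prop :=
  ∃ C, IsSBCWith Λ Φ C

/-- Row-finite shift: every letter has a finite follower set. -/
def RowFinite (Λ : Set (FullShift A)) : Prop :=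
  ∀ a ∈ letters Λ, {b : A | IsBlock Λ [a, b]}.Finite

/-- The `M`-th higher block code `Ξ^(M)`. -/
noncomputable def higherBlock (M : ℕ) (x : FullShift A) : FullShift (Fin M → A) where
  val i := if h : ∀ j : Fin M, (x.val (i + j)).isSome then
      some (fun j => (x.val (i + j)).get (h j)) else none
  tail := by
    intro i hi
    try dsimp only at hi ⊢
    have h1 : ¬ ∀ j : Fin M, (x.val (i + j)).isSome := by
      intro h
      rw [dif_pos h] at hi
      exact absurd hi (Option.some_ne_none _)
    push_neg at h1
    obtain ⟨j, hj⟩ := h1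
    have hjn : x.val (i + j) = none := Option.not_isSome_iff_eq_none.mp hj
    have hM : (0 : ℕ) < M := j.pos
    rw [dif_neg]
    intro h2
    have hsome := h2 ⟨M - 1, by omega⟩
    have hnone : x.val (i + 1 + ((⟨M - 1, by omega⟩ : Fin M) : ℕ)) = none := by
      apply val_none_mono x ?_ hjn
      have := j.isLt
      simp only [Fin.val_mk]
      omega
    rw [hnone] at hsome
    simp at hsome

/-!
If `Λ` is finitely defined in `Σ_A`, membership in `Λ` is decided by a prefix. An infinite
sequence in `Λ` would have a prefix forcing membership, and that prefix could be followed by any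
point outside `Λ`; shifting it away contradicts shift invariance. So `Λ` consists of finite
sequences, and by the infinite extension property every nonempty word of `Λ` extends to a
strictly longer one. The limit of these extensions is an infinite sequence, hence outside `Λ`,
so some prefix of it forces non-membership; but long words of `Λ` share that prefix.
-/

def infSeq (f : ℕ → A) : FullShift A :=
  ⟨fun i => some (f i), fun _ h => (Option.some_ne_none _ h).elim⟩

def prepend (u : List A) (z : FullShift A) : FullShift A where
  val i := u[i]?.or (z.val (i - u.length))
  tail i hi := by
    obtain ⟨hu, hz⟩ := Option.or_eq_none_iff.1 hi
    have hle : u.length ≤ i := List.getElem?_eq_none_iff.1 hu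
    rw [List.getElem?_eq_none (by omega), Option.none_or, show i + 1 - u.length = i - u.length + 1
      by omega]
    exact z.tail _ hz

theorem shiftMap_iterate_val (x : FullShift A) (n i : ℕ) :
    (shiftMap^[n] x).val i = x.val (i + n) := by
  induction n generalizing x with
  | zero => rfl
  | succ n ih => exact ih (shiftMap x)

theorem shiftMap_iterate_prepend (u : List A) (z : FullShift A) :
    shiftMap^[u.length] (prepend u z) = z := by
  ext1
  funext i
  simp [shiftMap_iterate_val, prepend]

theorem finSeq_val (w : List A) (i : ℕ) : (finSeq w).val i = w[i]? :=
  List.head?_drop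

theorem finSeq_nil : finSeq ([] : List A) = emptySeq := by
  ext1
  funext i
  simp [finSeq_val, emptySeq]

theorem exists_eq_finSeq_or_eq_infSeq (x : FullShift A) :
    (∃ w, x = finSeq w) ∨ ∃ f, x = infSeq f := by
  classical
  by_cases h : ∃ k, x.val k = none
  · have hsome : ∀ i < Nat.find h, (x.val i).isSome := fun i hi =>
      Option.ne_none_iff_isSome.1 (Nat.find_min h hi)
    refine .inl ⟨List.ofFn fun i : Fin (Nat.find h) => (x.val i).get (hsome i i.2), ?_⟩
    ext1
    funext i
    rw [finSeq_val, List.getElem?_ofFn]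
    split_ifs with hi
    · simp
    · exact val_none_mono x (not_lt.1 hi) (Nat.find_spec h)
  · push Not at h
    exact .inr ⟨fun i => (x.val i).get (Option.ne_none_iff_isSome.1 (h i)), by ext1; simp [infSeq]⟩

theorem IsBlock.exists_mem_val_eq {Λ : Set (FullShift A)} (hσ : Set.MapsTo shiftMap Λ Λ)
    {w : List A} (hw : IsBlock Λ w) : ∃ z ∈ Λ, ∀ i : Fin w.length, z.val i = some (w.get i) := by
  obtain ⟨x, hx, n, hn⟩ := hw
  refine ⟨shiftMap^[n] x, hσ.iterate n hx, fun i => ?_⟩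
  rw [shiftMap_iterate_val, add_comm]
  exact hn i

theorem prefix_of_finSeq_val_eq {v w : List A}
    (h : ∀ i : Fin w.length, (finSeq v).val i = some (w.get i)) : w <+: v :=
  List.prefix_iff_getElem?.2 fun i hi => by simpa [finSeq_val] using h ⟨i, hi⟩

theorem FDRep.mem_iff {C : Set (FullShift A)} {P Q : Set (List (Option A))}
    (h : FDRep Set.univ C P Q) {x : FullShift A} : x ∈ C ↔ ∃ b ∈ P, Prefixed x b := by
  rw [h.2.2.1]
  simp

theorem FDRep.notMem_iff {C : Set (FullShift A)} {P Q : Set (List (Option A))}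
    (h : FDRep Set.univ C P Q) {x : FullShift A} : x ∉ C ↔ ∃ b ∈ Q, Prefixed x b := by
  rw [← Set.mem_compl_iff, Set.compl_eq_univ_sdiff, h.2.2.2]
  simp

theorem infSeq_notMem_of_fdRep {Λ : Set (FullShift A)} {P Q : Set (List (Option A))}
    (hσ : Set.MapsTo shiftMap Λ Λ) (hproper : Λ ≠ Set.univ) (h : FDRep Set.univ Λ P Q)
    (f : ℕ → A) : infSeq f ∉ Λ := by
  intro hf
  obtain ⟨z, hz⟩ := (Set.ne_univ_iff_exists_notMem Λ).1 hproper
  obtain ⟨p, hp, hfp⟩ := h.mem_iff.1 hf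
  set u := List.ofFn fun i : Fin p.length => f i
  have hu : prepend u z ∈ Λ := h.mem_iff.2 ⟨p, hp, fun i => by
    rw [← hfp i]
    simp [prepend, infSeq, u]⟩
  exact hz (shiftMap_iterate_prepend u z ▸ hσ.iterate _ hu)

theorem IsShiftSpace.exists_extension {Λ : Set (FullShift A)} (hΛ : IsShiftSpace Λ)
    (hfin : ∀ x ∈ Λ, ∃ w, x = finSeq w) {v : List A} (hv : v ≠ []) (hvΛ : finSeq v ∈ Λ) :
    ∃ c, ∃ v' : List A, finSeq v' ∈ Λ ∧ v ++ [c] <+: v' := by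
  obtain ⟨c, hc⟩ := ((hΛ.2.2.2 v hv).1 hvΛ).nonempty
  obtain ⟨z, hzΛ, hz⟩ := IsBlock.exists_mem_val_eq hΛ.2.1 hc
  obtain ⟨v', rfl⟩ := hfin z hzΛ
  exact ⟨c, v', hzΛ, prefix_of_finSeq_val_eq hz⟩

theorem exists_seq_of_forall_exists_extension {S : Set (List A)} {v₀ : List A} (h₀ : v₀ ∈ S)
    (hext : ∀ v ∈ S, ∃ c, ∃ v' ∈ S, v ++ [c] <+: v') :
    ∃ f : ℕ → A, ∀ m, ∃ v ∈ S, ∀ i < m, v[i]? = some (f i) := by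
  choose c next hnextS hnext using hext
  let V : ℕ → S := fun n => Nat.rec ⟨v₀, h₀⟩ (fun _ v => ⟨next v v.2, hnextS v v.2⟩) n
  have hsucc (n : ℕ) : (V n).1 ++ [c _ (V n).2] <+: (V (n + 1)).1 := hnext _ _
  have hgrow (n : ℕ) : (V n).1.length < (V (n + 1)).1.length := by
    have := (hsucc n).length_le
    rwa [List.length_append, List.length_singleton] at this
  have hlen (n : ℕ) : n < (V (n + 1)).1.length := by
    induction n with
    | zero => exact (Nat.zero_le _).trans_lt (hgrow 0)
    | succ n ih => exact Nat.lt_of_le_of_lt ih (hgrow (n + 1))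
  have hmono {n m : ℕ} (hnm : n ≤ m) : (V n).1 <+: (V m).1 := by
    induction m, hnm using Nat.le_induction with
    | base => exact List.prefix_refl _
    | succ m _ ih => exact ih.trans ((List.prefix_append _ _).trans (hsucc m))
  refine ⟨fun i => (V (i + 1)).1[i]'(hlen i), fun m => ⟨(V m).1, (V m).2, fun i hi => ?_⟩⟩
  exact List.prefix_iff_getElem?.1 (hmono hi) i (hlen i)

theorem shiftSpace_not_finitelyDefined_general {A : Type*}
    (Λ : Set (FullShift A)) (hΛ : IsShiftSpace Λ) (hne : Λ.Nonempty)
    (hproper : Λ ≠ Set.univ) (hnotO : Λ ≠ {emptySeq}) :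
    ¬ FinitelyDefinedIn Set.univ Λ := by
  rintro ⟨P, Q, hFD⟩
  have hinf (f : ℕ → A) : infSeq f ∉ Λ := infSeq_notMem_of_fdRep hΛ.2.1 hproper hFD f
  have hfin (x) (hx : x ∈ Λ) : ∃ w, x = finSeq w :=
    (exists_eq_finSeq_or_eq_infSeq x).resolve_right fun ⟨f, hf⟩ => hinf f (hf ▸ hx)
  obtain ⟨x₀, hx₀, hx₀ne⟩ : ∃ x ∈ Λ, x ≠ emptySeq := by
    by_contra! h
    exact hnotO (Set.eq_singleton_iff_nonempty_unique_mem.2 ⟨hne, h⟩)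
  obtain ⟨v₀, rfl⟩ := hfin x₀ hx₀
  obtain ⟨f, hf⟩ := exists_seq_of_forall_exists_extension (S := {v | v ≠ [] ∧ finSeq v ∈ Λ})
    ⟨fun h => hx₀ne (by rw [h, finSeq_nil]), hx₀⟩ fun v ⟨hv, hvΛ⟩ => by
      obtain ⟨c, v', hv'Λ, hvv'⟩ := hΛ.exists_extension hfin hv hvΛ
      exact ⟨c, v', ⟨fun h => by simpa [h] using hvv'.length_le, hv'Λ⟩, hvv'⟩
  obtain ⟨q, hq, hfq⟩ := hFD.notMem_iff.1 (hinf f)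
  obtain ⟨v, ⟨-, hvΛ⟩, hv⟩ := hf q.length
  refine hFD.notMem_iff.2 ⟨q, hq, fun i => ?_⟩ hvΛ
  rw [finSeq_val, hv i i.2]
  exact hfq i

/-- a nonempty shift space `Λ ⊊ Σ_A` with `Λ ≠ {Ø}` is not a finitely
defined set in `Σ_A`. -/
theorem shiftSpace_not_finitelyDefined {A : Type*} [Countable A] [Infinite A]
    (Λ : Set (FullShift A)) (hΛ : IsShiftSpace Λ) (hne : Λ.Nonempty)
    (hproper : Λ ≠ Set.univ) (hnotO : Λ ≠ {emptySeq}) :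
    ¬ FinitelyDefinedIn Set.univ Λ :=
  shiftSpace_not_finitelyDefined_general Λ hΛ hne hproper hnotO

end OTW
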